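/- arXiv:1801.05037 — 4 statements merged into one kernel-verified Lean document; each statement's English description precedes it below -/
import Mathlib

section
/- Let A ∈ ℝ^{n×n} such that every row has L²-norm at most √n. Suppose u ∈ ℝⁿ with ‖u‖₂ ≤ √n and T ⊆ [n] satisfy |uᵀ A 1_T| ≥ δ n². Then there exists S ⊆ [n] with |1_Sᵀ A 1_T| ≥ (δ²/2) n². -/
/-- If every row of `A` has `L²`-norm at most `√n`, `‖u‖₂ ≤ √n`, and
`|uᵀ A 1_T| ≥ δ n²`, then some subset `S` satisfies `|1_Sᵀ A 1_T| ≥ (δ²/2) n²`. -/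
theorem stmt_6 (n : ℕ) (A : Matrix (Fin n) (Fin n) ℝ) (δ : ℝ) (hδ : 0 < δ)
    (hrow : ∀ i, ∑ k, (A i k) ^ 2 ≤ (n : ℝ))
    (u : Fin n → ℝ) (hu : ∑ i, (u i) ^ 2 ≤ (n : ℝ))
    (T : Finset (Fin n))
    (h : |∑ i, u i * ∑ k ∈ T, A i k| ≥ δ * (n : ℝ) ^ 2) :
    ∃ S : Finset (Fin n), |∑ i ∈ S, ∑ k ∈ T, A i k| ≥ δ ^ 2 / 2 * (n : ℝ) ^ 2 := by
  rcases Nat.eq_zero_or_pos n with hn | hn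
  · exact ⟨∅, by simp [hn]⟩
  have hn0 : (0:ℝ) < n := by exact_mod_cast hn
  set v : Fin n → ℝ := fun i => ∑ k ∈ T, A i k with hv
  -- each |v i| ≤ n
  have hvsq : ∀ i, (v i) ^ 2 ≤ (n:ℝ) ^ 2 := by
    intro i
    have h1 : (∑ k ∈ T, 1 * A i k) ^ 2 ≤ (∑ k ∈ T, (1:ℝ) ^ 2) * (∑ k ∈ T, (A i k) ^ 2) :=
      Finset.sum_mul_sq_le_sq_mul_sq T _ _
    have h2 : (∑ k ∈ T, (A i k) ^ 2) ≤ (n:ℝ) := by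
      refine le_trans (Finset.sum_le_sum_of_subset_of_nonneg (Finset.subset_univ T)
        (fun _ _ _ => sq_nonneg _)) (hrow i)
    have h2' : (0:ℝ) ≤ ∑ k ∈ T, (A i k) ^ 2 := Finset.sum_nonneg fun _ _ => sq_nonneg _
    have h3 : ((T.card : ℝ)) ≤ n := by
      have := Finset.card_le_univ T
      simp only [Finset.card_univ, Fintype.card_fin] at this
      exact_mod_cast this
    simp only [one_mul, one_pow, Finset.sum_const, nsmul_eq_mul, mul_one] at h1
    calc (v i) ^ 2 ≤ (T.card : ℝ) * (∑ k ∈ T, (A i k) ^ 2) := h1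
      _ ≤ (n:ℝ) * (n:ℝ) := by
          apply mul_le_mul h3 h2 h2' hn0.le
      _ = (n:ℝ) ^ 2 := (sq (n:ℝ)).symm
  have hvabs : ∀ i, |v i| ≤ (n:ℝ) := by
    intro i
    rw [abs_le]
    constructor <;> nlinarith [hvsq i]
  -- Cauchy–Schwarz
  have hcs : (∑ i, u i * v i) ^ 2 ≤ (∑ i, (u i) ^ 2) * (∑ i, (v i) ^ 2) :=
    Finset.sum_mul_sq_le_sq_mul_sq Finset.univ u v
  have hvsq_sum : δ ^ 2 * (n:ℝ) ^ 3 ≤ ∑ i, (v i) ^ 2 := by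
    have h1 : (δ * (n:ℝ) ^ 2) ^ 2 ≤ (∑ i, u i * v i) ^ 2 := by
      have := sq_abs (∑ i, u i * v i)
      nlinarith [h, abs_nonneg (∑ i, u i * v i), mul_pos hδ (pow_pos hn0 2)]
    have hsv : (0:ℝ) ≤ ∑ i, (v i) ^ 2 := Finset.sum_nonneg fun _ _ => sq_nonneg _
    nlinarith [hcs, hu]
  -- ∑ |v| ≥ δ² n²
  have habs_sum : δ ^ 2 * (n:ℝ) ^ 2 ≤ ∑ i, |v i| := by
    have h1 : ∑ i, (v i) ^ 2 ≤ ∑ i, (n:ℝ) * |v i| := by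
      apply Finset.sum_le_sum
      intro i _
      have := sq_abs (v i)
      nlinarith [hvabs i, abs_nonneg (v i)]
    rw [← Finset.mul_sum] at h1
    have : δ ^ 2 * (n:ℝ) ^ 3 ≤ (n:ℝ) * ∑ i, |v i| := le_trans hvsq_sum h1
    nlinarith
  -- split into positive and negative parts
  set P := Finset.univ.filter (fun i => 0 ≤ v i) with hP
  set N := Finset.univ.filter (fun i => ¬ 0 ≤ v i) with hN
  have hsplit : ∑ i ∈ P, |v i| + ∑ i ∈ N, |v i| = ∑ i, |v i| :=
    Finset.sum_filter_add_sum_filter_not _ _ _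
  have hPsum : ∑ i ∈ P, |v i| = ∑ i ∈ P, v i := by
    apply Finset.sum_congr rfl
    intro i hi
    exact abs_of_nonneg (Finset.mem_filter.mp hi).2
  have hNsum : ∑ i ∈ N, |v i| = -∑ i ∈ N, v i := by
    rw [← Finset.sum_neg_distrib]
    apply Finset.sum_congr rfl
    intro i hi
    exact abs_of_neg (lt_of_not_ge (Finset.mem_filter.mp hi).2)
  rcases le_or_gt (δ ^ 2 / 2 * (n:ℝ) ^ 2) (∑ i ∈ P, v i) with hc | hc
  · refine ⟨P, ?_⟩
    calc δ ^ 2 / 2 * (n:ℝ) ^ 2 ≤ ∑ i ∈ P, v i := hc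
      _ ≤ |∑ i ∈ P, v i| := le_abs_self _
  · refine ⟨N, ?_⟩
    have : δ ^ 2 / 2 * (n:ℝ) ^ 2 ≤ -∑ i ∈ N, v i := by
      have := hsplit
      rw [hPsum, hNsum] at this
      nlinarith [habs_sum]
    calc δ ^ 2 / 2 * (n:ℝ) ^ 2 ≤ -∑ i ∈ N, v i := this
      _ ≤ |∑ i ∈ N, v i| := neg_le_abs _
end

section
/- Let A ∈ ℝ^{n×n}, let S, T ⊆ [n], σ ∈ {−1,1}, ε' > 0, and t = σ ε'/3. Suppose σ Σ_{i∈S,k∈T} a_{i,k} ≥ (2/3) ε' n². Let A' be obtained from A by subtracting t from every entry a_{i,k} with (i,k) ∈ S×T. Then ‖A'‖_F² ≤ ‖A‖_F² − (ε'²/3) n², where ‖·‖_F is the Frobenius norm. -/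
/-- Subtracting `t = σε'/3` from the entries of `A` over `S × T`, where
`σ Σ_{S×T} a_{i,k} ≥ (2/3)ε'n²`, decreases the squared Frobenius norm by at least
`(ε'²/3)n²`. -/
theorem stmt_9 (n : ℕ) (A : Matrix (Fin n) (Fin n) ℝ) (ε' : ℝ) (hε' : 0 < ε')
    (σ : ℝ) (hσ : σ = 1 ∨ σ = -1) (t : ℝ) (ht : t = σ * ε' / 3)
    (S T : Finset (Fin n))
    (h : σ * ∑ i ∈ S, ∑ k ∈ T, A i k ≥ 2 / 3 * ε' * (n : ℝ) ^ 2)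
    (A' : Matrix (Fin n) (Fin n) ℝ)
    (hA' : ∀ i k, A' i k = if i ∈ S ∧ k ∈ T then A i k - t else A i k) :
    ∑ i, ∑ k, (A' i k) ^ 2 ≤ (∑ i, ∑ k, (A i k) ^ 2) - ε' ^ 2 / 3 * (n : ℝ) ^ 2 := by
  have key : ∀ i k, (A' i k) ^ 2 = (A i k) ^ 2 +
      (if i ∈ S then (if k ∈ T then t ^ 2 - 2 * t * A i k else 0) else 0) := by
    intro i k
    rw [hA']
    by_cases hi : i ∈ S <;> by_cases hk : k ∈ T <;> simp [hi, hk] <;> ring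
  have hsum : ∑ i, ∑ k, (A' i k) ^ 2 = (∑ i, ∑ k, (A i k) ^ 2) +
      ∑ i ∈ S, ∑ k ∈ T, (t ^ 2 - 2 * t * A i k) := by
    simp only [key, Finset.sum_add_distrib]
    congr 1
    have inner : ∀ i : Fin n, (∑ k, if i ∈ S then (if k ∈ T then t ^ 2 - 2 * t * A i k else 0) else 0)
        = if i ∈ S then ∑ k ∈ T, (t ^ 2 - 2 * t * A i k) else 0 := by
      intro i
      by_cases hi : i ∈ S <;> simp [hi, Finset.sum_ite_mem]
    simp only [inner, Finset.sum_ite_mem, Finset.univ_inter]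
  rw [hsum]
  have hexp : ∑ i ∈ S, ∑ k ∈ T, (t ^ 2 - 2 * t * A i k) =
      (S.card : ℝ) * T.card * t ^ 2 - 2 * t * ∑ i ∈ S, ∑ k ∈ T, A i k := by
    simp [Finset.sum_sub_distrib, ← Finset.mul_sum, Finset.sum_mul]
    ring
  rw [hexp]
  have hS : (S.card : ℝ) ≤ n := by exact_mod_cast (S.card_le_univ.trans_eq (by simp))
  have hT : (T.card : ℝ) ≤ n := by exact_mod_cast (T.card_le_univ.trans_eq (by simp))
  have hS0 : (0:ℝ) ≤ S.card := by positivity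
  have hT0 : (0:ℝ) ≤ T.card := by positivity
  have hσ2 : σ * σ = 1 := by rcases hσ with h1 | h1 <;> rw [h1] <;> norm_num
  have hSig : ∑ i ∈ S, ∑ k ∈ T, A i k = σ * (σ * ∑ i ∈ S, ∑ k ∈ T, A i k) := by
    rw [← mul_assoc, hσ2, one_mul]
  rw [hSig, ht]
  set B := σ * ∑ i ∈ S, ∑ k ∈ T, A i k with hB
  have h2 : 2 * (σ * ε' / 3) * (σ * B) = 2 * ε' / 3 * B := by
    linear_combination 2 * ε' * B / 3 * hσ2
  rw [h2]
  have ht2 : (σ * ε' / 3) ^ 2 = ε' ^ 2 / 9 := by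
    linear_combination ε' ^ 2 / 9 * hσ2
  rw [ht2]
  nlinarith [mul_le_mul hS hT hT0 (Nat.cast_nonneg n : (0:ℝ) ≤ n), sq_nonneg ε', mul_le_mul_of_nonneg_left h (le_of_lt (by positivity : (0:ℝ) < 2 * ε' / 3))]
end

section
/- Let H be a graph on [k] containing edge {1,2}, and let G, G' be k-partite weighted graphs on parts V₁,…,V_k (each of size at most n), identical except possibly on the bipartite graph between V₁ and V₂, with all weights of G in [0,1]. Then |hom*(H,G) − hom*(H,G')| ≤ n^{k−2} · max_{U⊆V₁, W⊆V₂} |e_{G₁₂}(U,W) − e_{G'₁₂}(U,W)|, where G₁₂, G'₁₂ denote the bipartite graphs between V₁ and V₂. -/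
/-!
Only the edge `{0, 1}` sees the change, so `hom*(H,G) - hom*(H,G')` is the sum over all tuples of
`(G - G')(v₀, v₁)` times the product of the remaining edge weights. Once the coordinates outside
the first two parts are fixed (at most `n ^ k` choices), that product splits as `f v₀ * g v₁` with
`f, g` valued in `[0,1]`, because no other edge meets both of the first two parts. A bilinear form
is affine in each of `f` and `g`, so its absolute value is maximised at indicator functions of
sets `U, W`, where it becomes `|e_G(U,W) - e_G'(U,W)|`.
-/

open Finset

/-- Multipartite homomorphism count: the sum over tuples of the product of edge weights. -/
def homStar {k : ℕ} (H : SimpleGraph (Fin k)) [DecidableRel H.Adj]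
    (V : Fin k → Type) [∀ i, Fintype (V i)]
    (w : ∀ i j, V i → V j → ℝ) : ℝ :=
  ∑ v : (∀ i, V i),
    ∏ p ∈ Finset.univ.filter (fun p : Fin k × Fin k => p.1 < p.2 ∧ H.Adj p.1 p.2),
      w p.1 p.2 (v p.1) (v p.2)

section CutNorm

variable {α β : Type*}

noncomputable def cutNorm (D : α → β → ℝ) : ℝ :=
  ⨆ p : Finset α × Finset β, |∑ u ∈ p.1, ∑ v ∈ p.2, D u v|

variable [Fintype α] [Fintype β]

lemma abs_sum_sum_le_cutNorm (D : α → β → ℝ) (U : Finset α) (W : Finset β) :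
    |∑ u ∈ U, ∑ v ∈ W, D u v| ≤ cutNorm D :=
  le_ciSup (f := fun p : Finset α × Finset β => |∑ u ∈ p.1, ∑ v ∈ p.2, D u v|)
    (Set.finite_range _).bddAbove (U, W)

lemma cutNorm_nonneg (D : α → β → ℝ) : 0 ≤ cutNorm D := by
  simpa using abs_sum_sum_le_cutNorm D ∅ ∅

lemma exists_abs_sum_mul_le_abs_sum (f c : α → ℝ) (hf : ∀ x, f x ∈ Set.Icc (0 : ℝ) 1) :
    ∃ U : Finset α, |∑ x, f x * c x| ≤ |∑ x ∈ U, c x| := by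
  classical
  have upper : ∑ x, f x * c x ≤ ∑ x with 0 ≤ c x, c x := by
    rw [sum_filter]
    refine sum_le_sum fun x _ => ?_
    split_ifs <;> nlinarith [(hf x).1, (hf x).2]
  have lower : ∑ x with c x < 0, c x ≤ ∑ x, f x * c x := by
    rw [sum_filter]
    refine sum_le_sum fun x _ => ?_
    split_ifs <;> nlinarith [(hf x).1, (hf x).2]
  rcases le_total 0 (∑ x, f x * c x) with h | h
  · exact ⟨_, by rw [abs_of_nonneg h]; exact upper.trans (le_abs_self _)⟩
  · exact ⟨_, by rw [abs_of_nonpos h]; exact (neg_le_neg lower).trans (neg_le_abs _)⟩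

lemma abs_sum_sum_mul_le_cutNorm (f : α → ℝ) (g : β → ℝ) (D : α → β → ℝ)
    (hf : ∀ x, f x ∈ Set.Icc (0 : ℝ) 1) (hg : ∀ y, g y ∈ Set.Icc (0 : ℝ) 1) :
    |∑ x, ∑ y, f x * g y * D x y| ≤ cutNorm D := by
  obtain ⟨U, hU⟩ := exists_abs_sum_mul_le_abs_sum f (fun x => ∑ y, g y * D x y) hf
  obtain ⟨W, hW⟩ := exists_abs_sum_mul_le_abs_sum g (fun y => ∑ x ∈ U, D x y) hg
  calc |∑ x, ∑ y, f x * g y * D x y|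
      = |∑ x, f x * ∑ y, g y * D x y| := by simp only [mul_sum, mul_assoc]
    _ ≤ |∑ x ∈ U, ∑ y, g y * D x y| := hU
    _ = |∑ y, g y * ∑ x ∈ U, D x y| := by rw [sum_comm]; simp only [mul_sum]
    _ ≤ |∑ y ∈ W, ∑ x ∈ U, D x y| := hW
    _ = |∑ u ∈ U, ∑ v ∈ W, D u v| := by rw [sum_comm]
    _ ≤ cutNorm D := abs_sum_sum_le_cutNorm D U W

end CutNorm

section TupleWeight

variable {m : ℕ} {V : Fin m → Type} (w : ∀ i j, V i → V j → ℝ)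

def orderedEdges (H : SimpleGraph (Fin m)) [DecidableRel H.Adj] : Finset (Fin m × Fin m) :=
  univ.filter fun p => p.1 < p.2 ∧ H.Adj p.1 p.2

def tupleWeight (s : Finset (Fin m × Fin m)) (v : ∀ i, V i) : ℝ :=
  ∏ p ∈ s, w p.1 p.2 (v p.1) (v p.2)

lemma homStar_eq_sum_tupleWeight (H : SimpleGraph (Fin m)) [DecidableRel H.Adj]
    [∀ i, Fintype (V i)] : homStar H V w = ∑ v, tupleWeight w (orderedEdges H) v :=
  rfl

lemma tupleWeight_mem_Icc (hw : ∀ i j x y, w i j x y ∈ Set.Icc (0 : ℝ) 1)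
    (s : Finset (Fin m × Fin m)) (v : ∀ i, V i) : tupleWeight w s v ∈ Set.Icc (0 : ℝ) 1 :=
  ⟨prod_nonneg fun _ _ => (hw _ _ _ _).1,
    prod_le_one (fun _ _ => (hw _ _ _ _).1) fun _ _ => (hw _ _ _ _).2⟩

lemma tupleWeight_congr_of_avoid {s : Finset (Fin m × Fin m)} {i : Fin m}
    (hs : ∀ p ∈ s, p.1 ≠ i ∧ p.2 ≠ i) {v v' : ∀ i, V i} (hv : ∀ j ≠ i, v j = v' j) :
    tupleWeight w s v = tupleWeight w s v' :=
  prod_congr rfl fun p hp => by rw [hv _ (hs p hp).1, hv _ (hs p hp).2]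

lemma homStar_sub_homStar_eq_sum (H : SimpleGraph (Fin m)) [DecidableRel H.Adj]
    [∀ i, Fintype (V i)] (w' : ∀ i j, V i → V j → ℝ) {a b : Fin m} (hab : a < b)
    (hadj : H.Adj a b) (hagree : ∀ i j, (i, j) ≠ (a, b) → w' i j = w i j) :
    homStar H V w - homStar H V w' =
      ∑ v, (w a b (v a) (v b) - w' a b (v a) (v b)) *
        tupleWeight w ((orderedEdges H).erase (a, b)) v := by
  have hmem : (a, b) ∈ orderedEdges H := by simp [orderedEdges, hab, hadj]
  have hrest : ∀ v : ∀ i, V i, tupleWeight w' ((orderedEdges H).erase (a, b)) v =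
      tupleWeight w ((orderedEdges H).erase (a, b)) v := fun v =>
    prod_congr rfl fun p hp => by rw [hagree p.1 p.2 (ne_of_mem_erase hp)]
  simp only [homStar_eq_sum_tupleWeight, ← sum_sub_distrib, tupleWeight,
    ← mul_prod_erase _ _ hmem]
  refine sum_congr rfl fun v _ => ?_
  rw [← tupleWeight, ← tupleWeight, hrest]
  ring

end TupleWeight

lemma Fin.sum_pi_eq_sum_sum_sum_cons_cons {k : ℕ} {V : Fin (k + 2) → Type}
    [∀ i, Fintype (V i)] (h : (∀ i, V i) → ℝ) :
    ∑ v, h v = ∑ z : ∀ i : Fin k, V i.succ.succ, ∑ x : V 0, ∑ y : V 1,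
      h (Fin.cons x (Fin.cons y z)) := by
  have split_tail : ∀ x : V 0, ∑ p : ∀ i : Fin (k + 1), V i.succ, h (Fin.cons x p) =
      ∑ y : V 1, ∑ z : ∀ i : Fin k, V i.succ.succ, h (Fin.cons x (Fin.cons y z)) := fun x => by
    rw [← (Fin.consEquiv _).sum_comp, Fintype.sum_prod_type]
    rfl
  calc ∑ v, h v = ∑ x : V 0, ∑ y : V 1, ∑ z : ∀ i : Fin k, V i.succ.succ,
        h (Fin.cons x (Fin.cons y z)) := by
        rw [← (Fin.consEquiv V).sum_comp, Fintype.sum_prod_type]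
        exact sum_congr rfl fun x _ => split_tail x
    _ = ∑ x : V 0, ∑ z : ∀ i : Fin k, V i.succ.succ, ∑ y : V 1,
        h (Fin.cons x (Fin.cons y z)) := sum_congr rfl fun _ _ => sum_comm
    _ = _ := sum_comm

lemma Fintype.card_pi_le_pow {k n : ℕ} {W : Fin k → Type} [∀ i, Fintype (W i)]
    (hcard : ∀ i, Fintype.card (W i) ≤ n) : Fintype.card (∀ i, W i) ≤ n ^ k := by
  simpa [Fintype.card_pi] using prod_le_pow_card univ _ n fun i _ => hcard i

section FirstTwoParts

variable {k : ℕ} {V : Fin (k + 2) → Type} (w : ∀ i j, V i → V j → ℝ)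
  {s : Finset (Fin (k + 2) × Fin (k + 2))}

lemma tupleWeight_cons_cons_eq_mul (hs : ∀ p ∈ s, p.1 < p.2 ∧ p ≠ (0, 1)) (x₀ x : V 0)
    (y₀ y : V 1) (z : ∀ i : Fin k, V i.succ.succ) :
    tupleWeight w s (Fin.cons x (Fin.cons y z)) =
      tupleWeight w (s.filter fun p => ¬ p.1 = 1) (Fin.cons x (Fin.cons y₀ z)) *
        tupleWeight w (s.filter fun p => p.1 = 1) (Fin.cons x₀ (Fin.cons y z)) := by
  have avoid_zero : ∀ p ∈ s.filter (fun p => p.1 = 1), p.1 ≠ 0 ∧ p.2 ≠ 0 := by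
    intro p hp
    obtain ⟨hp, h1⟩ := mem_filter.mp hp
    exact ⟨h1 ▸ one_ne_zero, ((Fin.zero_le _).trans_lt (hs p hp).1).ne'⟩
  have avoid_one : ∀ p ∈ s.filter (fun p => ¬ p.1 = 1), p.1 ≠ 1 ∧ p.2 ≠ 1 := by
    intro p hp
    obtain ⟨hp, h1⟩ := mem_filter.mp hp
    refine ⟨h1, fun h2 => (hs p hp).2 (Prod.ext ?_ h2)⟩
    exact (Fin.lt_one_iff _).mp (h2 ▸ (hs p hp).1)
  have agree_off_zero : ∀ j ≠ (0 : Fin (k + 2)),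
      (Fin.cons x (Fin.cons y z) : ∀ i, V i) j = Fin.cons x₀ (Fin.cons y z) j := by
    intro j hj
    rcases Fin.eq_zero_or_eq_succ j with rfl | ⟨j, rfl⟩
    · exact absurd rfl hj
    · rfl
  have agree_off_one : ∀ j ≠ (1 : Fin (k + 2)),
      (Fin.cons x (Fin.cons y z) : ∀ i, V i) j = Fin.cons x (Fin.cons y₀ z) j := by
    intro j hj
    rcases Fin.eq_zero_or_eq_succ j with rfl | ⟨j, rfl⟩
    · rfl
    rcases Fin.eq_zero_or_eq_succ j with rfl | ⟨j, rfl⟩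
    · exact absurd rfl hj
    · rfl
  rw [← tupleWeight_congr_of_avoid w avoid_zero agree_off_zero,
    ← tupleWeight_congr_of_avoid w avoid_one agree_off_one, mul_comm]
  exact (prod_filter_mul_prod_filter_not s _ _).symm

lemma abs_sum_sum_mul_tupleWeight_cons_le_cutNorm [∀ i, Fintype (V i)]
    (hw : ∀ i j x y, w i j x y ∈ Set.Icc (0 : ℝ) 1) (hs : ∀ p ∈ s, p.1 < p.2 ∧ p ≠ (0, 1))
    (D : V 0 → V 1 → ℝ) (z : ∀ i : Fin k, V i.succ.succ) :
    |∑ x, ∑ y, D x y * tupleWeight w s (Fin.cons x (Fin.cons y z))| ≤ cutNorm D := by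
  rcases isEmpty_or_nonempty (V 0) with _ | ⟨⟨x₀⟩⟩
  · simp [cutNorm_nonneg]
  rcases isEmpty_or_nonempty (V 1) with _ | ⟨⟨y₀⟩⟩
  · simp [cutNorm_nonneg]
  calc |∑ x, ∑ y, D x y * tupleWeight w s (Fin.cons x (Fin.cons y z))|
      = |∑ x, ∑ y,
          tupleWeight w (s.filter fun p => ¬ p.1 = 1) (Fin.cons x (Fin.cons y₀ z)) *
          tupleWeight w (s.filter fun p => p.1 = 1) (Fin.cons x₀ (Fin.cons y z)) * D x y| := by
        simp only [tupleWeight_cons_cons_eq_mul w hs x₀ _ y₀, mul_comm (D _ _)]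
        rfl
    _ ≤ cutNorm D := abs_sum_sum_mul_le_cutNorm _ _ D (fun _ => tupleWeight_mem_Icc w hw _ _)
        fun _ => tupleWeight_mem_Icc w hw _ _

end FirstTwoParts

/-- If `H` contains the edge `{0,1}` and the `k`-partite weighted graphs `G, G'` agree
except possibly between the first two parts (with `G` taking values in `[0,1]` and parts
of size at most `n`), then `|hom*(H,G) − hom*(H,G')|` is bounded by `n^{k−2}` times the
cut discrepancy between the two bipartite graphs between the first two parts. -/
theorem stmt_17 (k n : ℕ) (H : SimpleGraph (Fin (k + 2))) [DecidableRel H.Adj]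
    (hadj : H.Adj 0 1)
    (V : Fin (k + 2) → Type) [∀ i, Fintype (V i)]
    (hcard : ∀ i, Fintype.card (V i) ≤ n)
    (w w' : ∀ i j, V i → V j → ℝ)
    (hw : ∀ i j x y, w i j x y ∈ Set.Icc (0 : ℝ) 1)
    (hagree : ∀ i j : Fin (k + 2), (i, j) ≠ ((0 : Fin (k + 2)), (1 : Fin (k + 2))) →
      w' i j = w i j) :
    |homStar H V w - homStar H V w'| ≤
      (n : ℝ) ^ k *
        ⨆ p : Finset (V 0) × Finset (V 1),
          |∑ u ∈ p.1, ∑ v ∈ p.2, (w 0 1 u v - w' 0 1 u v)| := by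
  set D : V 0 → V 1 → ℝ := fun u v => w 0 1 u v - w' 0 1 u v
  have hs : ∀ p ∈ (orderedEdges H).erase (0, 1), p.1 < p.2 ∧ p ≠ (0, 1) := fun p hp =>
    ⟨(mem_filter.mp (mem_of_mem_erase hp)).2.1, ne_of_mem_erase hp⟩
  have hcard_tail : (Fintype.card (∀ i : Fin k, V i.succ.succ) : ℝ) ≤ (n : ℝ) ^ k := by
    exact_mod_cast Fintype.card_pi_le_pow fun i => hcard _
  change _ ≤ _ * cutNorm D
  rw [homStar_sub_homStar_eq_sum w H w' Fin.zero_lt_one hadj hagree,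
    Fin.sum_pi_eq_sum_sum_sum_cons_cons]
  simp only [Fin.cons_zero, Fin.cons_one]
  calc _ ≤ ∑ z : ∀ i : Fin k, V i.succ.succ,
        |∑ x, ∑ y, D x y * tupleWeight w _ (Fin.cons x (Fin.cons y z))| := abs_sum_le_sum_abs _ _
    _ ≤ ∑ _z : ∀ i : Fin k, V i.succ.succ, cutNorm D :=
        sum_le_sum fun z _ => abs_sum_sum_mul_tupleWeight_cons_le_cutNorm w hw hs D z
    _ = Fintype.card (∀ i : Fin k, V i.succ.succ) * cutNorm D := by simp
    _ ≤ (n : ℝ) ^ k * cutNorm D := mul_le_mul_of_nonneg_right hcard_tail (cutNorm_nonneg D)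
end

section
/- Let A ∈ [−1,1]^{n×n}. For any sequence of updates A₀ = A, A_{l+1} = A_l − t_l·1_{S_l}1_{T_l}ᵀ with |t_l| = ε'/3 for a fixed ε' > 0, the number of steps l for which σ_l Σ_{(i,k) ∈ S_l×T_l} (A_l)_{i,k} ≥ (2/3) ε' n² (where σ_l = sign(t_l)) is at most 3/ε'², since each such step decreases ‖A_l‖_F² by at least (ε'²/3)n² and ‖A₀‖_F² ≤ n². -/
/-!
Subtracting `t` on the cut `S × T` changes the squared Frobenius norm by
`-2t Σ_{S×T} A + |S||T| t²`. With `|t| = ε'/3`, a cut on which `σ Σ_{S×T} A ≥ (2/3)ε'n²`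
therefore lowers it by at least `(4/9 - 1/9)ε'²n² = (ε'²/3)n²`. Since the squared norm starts
at most `n²` and never becomes negative, there are at most `3/ε'²` such steps.
-/

open Finset

section CutUpdate

variable {ι κ : Type*} [Fintype ι] [Fintype κ] [DecidableEq ι] [DecidableEq κ]

lemma sum_sum_ite_mem_and (S : Finset ι) (T : Finset κ) (f : ι → κ → ℝ) :
    ∑ i, ∑ k, (if i ∈ S ∧ k ∈ T then f i k else 0) = ∑ i ∈ S, ∑ k ∈ T, f i k := by
  simp only [ite_and, sum_ite_irrel, sum_ite_mem, univ_inter, sum_const_zero]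

lemma sum_sum_sq_sub_cut (B : ι → κ → ℝ) (S : Finset ι) (T : Finset κ) (t : ℝ) :
    ∑ i, ∑ k, (B i k - if i ∈ S ∧ k ∈ T then t else 0) ^ 2 =
      ∑ i, ∑ k, B i k ^ 2 - 2 * t * ∑ i ∈ S, ∑ k ∈ T, B i k + #S * #T * t ^ 2 := by
  have hterm : ∀ i k, (B i k - if i ∈ S ∧ k ∈ T then t else 0) ^ 2 =
      B i k ^ 2 - 2 * t * (if i ∈ S ∧ k ∈ T then B i k else 0)
        + (if i ∈ S ∧ k ∈ T then t ^ 2 else 0) := by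
    intro i k; split_ifs <;> ring
  simp only [hterm, sum_add_distrib, sum_sub_distrib, ← mul_sum, sum_sum_ite_mem_and,
    sum_const, nsmul_eq_mul]
  ring

lemma sum_sum_sq_sub_cut_le {B : ι → κ → ℝ} {S : Finset ι} {T : Finset κ} {σ ε : ℝ}
    (hσ : σ = 1 ∨ σ = -1) (hε : 0 ≤ ε)
    (hcut : σ * ∑ i ∈ S, ∑ k ∈ T, B i k ≥ 2 / 3 * ε * (Fintype.card ι * Fintype.card κ)) :
    ∑ i, ∑ k, (B i k - if i ∈ S ∧ k ∈ T then σ * ε / 3 else 0) ^ 2 ≤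
      ∑ i, ∑ k, B i k ^ 2 - ε ^ 2 / 3 * (Fintype.card ι * Fintype.card κ) := by
  have hσ2 : σ ^ 2 = 1 := by rcases hσ with rfl | rfl <;> norm_num
  have hS : (#S : ℝ) ≤ Fintype.card ι := by exact_mod_cast card_le_univ S
  have hT : (#T : ℝ) ≤ Fintype.card κ := by exact_mod_cast card_le_univ T
  have hST : (#S : ℝ) * #T ≤ Fintype.card ι * Fintype.card κ :=
    mul_le_mul hS hT (by positivity) (by positivity)
  have hlin : 2 * (σ * ε / 3) * ∑ i ∈ S, ∑ k ∈ T, B i k ≥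
      4 / 9 * ε ^ 2 * (Fintype.card ι * Fintype.card κ) := by
    have := mul_le_mul_of_nonneg_left hcut (by positivity : (0 : ℝ) ≤ 2 * ε / 3)
    linear_combination this
  have hquad : (σ * ε / 3) ^ 2 = ε ^ 2 / 9 := by linear_combination ε ^ 2 / 9 * hσ2
  rw [sum_sum_sq_sub_cut, hquad]
  nlinarith [sq_nonneg ε]

end CutUpdate

lemma sum_sum_sq_le_card_mul_card {ι κ : Type*} [Fintype ι] [Fintype κ] {B : ι → κ → ℝ}
    (hB : ∀ i k, B i k ∈ Set.Icc (-1 : ℝ) 1) :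
    ∑ i, ∑ k, B i k ^ 2 ≤ Fintype.card ι * Fintype.card κ := by
  calc ∑ i, ∑ k, B i k ^ 2 ≤ ∑ _i : ι, ∑ _k : κ, (1 : ℝ) :=
        sum_le_sum fun i _ => sum_le_sum fun k _ => sq_le_one_iff_abs_le_one _ |>.mpr <|
          abs_le.mpr (hB i k)
    _ = Fintype.card ι * Fintype.card κ := by simp

lemma le_sub_mul_of_forall_lt_le_sub {f : ℕ → ℝ} {δ : ℝ} {L : ℕ}
    (hf : ∀ l < L, f (l + 1) ≤ f l - δ) : f L ≤ f 0 - L * δ := by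
  induction L with
  | zero => simp
  | succ L ih =>
    have hlast := hf L L.lt_succ_self
    have hprev := ih fun l hl => hf l (hl.trans L.lt_succ_self)
    push_cast
    linarith

/-- For the iterative cut-decomposition process `A_{l+1} = A_l − t_l·1_{S_l}1_{T_l}ᵀ`
with `|t_l| = ε'/3`, starting from a matrix with entries in `[−1,1]`: each step at which
`σ_l Σ_{S_l×T_l}(A_l)_{i,k} ≥ (2/3)ε'n²` decreases the squared Frobenius norm by at
least `(ε'²/3)n²`; hence the number of such steps (if every step is such) is at most
`3/ε'²`. -/
theorem stmt_19 (n : ℕ) (hn : 0 < n) (ε' : ℝ) (hε' : 0 < ε')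
    (A : ℕ → Matrix (Fin n) (Fin n) ℝ)
    (hA0 : ∀ i k, A 0 i k ∈ Set.Icc (-1 : ℝ) 1)
    (S T : ℕ → Finset (Fin n)) (σ : ℕ → ℝ) (hσ : ∀ l, σ l = 1 ∨ σ l = -1)
    (t : ℕ → ℝ) (ht : ∀ l, t l = σ l * ε' / 3)
    (hstep : ∀ l i k, A (l + 1) i k =
      A l i k - if i ∈ S l ∧ k ∈ T l then t l else 0) :
    (∀ l, σ l * (∑ i ∈ S l, ∑ k ∈ T l, A l i k) ≥ 2 / 3 * ε' * (n : ℝ) ^ 2 →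
      ∑ i, ∑ k, (A (l + 1) i k) ^ 2 ≤
        (∑ i, ∑ k, (A l i k) ^ 2) - ε' ^ 2 / 3 * (n : ℝ) ^ 2) ∧
    ∀ L : ℕ,
      (∀ l < L, σ l * (∑ i ∈ S l, ∑ k ∈ T l, A l i k) ≥ 2 / 3 * ε' * (n : ℝ) ^ 2) →
      (L : ℝ) ≤ 3 / ε' ^ 2 := by
  have hdec : ∀ l, σ l * (∑ i ∈ S l, ∑ k ∈ T l, A l i k) ≥ 2 / 3 * ε' * (n : ℝ) ^ 2 →
      ∑ i, ∑ k, (A (l + 1) i k) ^ 2 ≤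
        (∑ i, ∑ k, (A l i k) ^ 2) - ε' ^ 2 / 3 * (n : ℝ) ^ 2 := by
    intro l hl
    simp only [hstep, ht]
    simpa [sq] using sum_sum_sq_sub_cut_le (B := A l) (hσ l) hε'.le (by simpa [sq] using hl)
  refine ⟨hdec, fun L hL => ?_⟩
  have hlast := le_sub_mul_of_forall_lt_le_sub (f := fun l => ∑ i, ∑ k, A l i k ^ 2)
    fun l hl => hdec l (hL l hl)
  have hfirst : ∑ i, ∑ k, A 0 i k ^ 2 ≤ (n : ℝ) ^ 2 := by
    simpa [sq] using sum_sum_sq_le_card_mul_card (hA0 ·)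
  have hnonneg : (0 : ℝ) ≤ ∑ i, ∑ k, A L i k ^ 2 := by positivity
  have hn2 : (0 : ℝ) < (n : ℝ) ^ 2 := by positivity
  rw [le_div_iff₀ (by positivity)]
  nlinarith
end
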